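/- Under the hypotheses of the oblivious-distribute invariant (f strictly increasing, 1 ≤ f(i) ≤ m, positions updated by greedy power-of-two hops from I_0(i) = i+1), the final positions satisfy I_{k+1}(i) = f(i) for every i, where k = ⌈log₂ m⌉ − 1. -/

import Mathlib

/-!
Each round halves the hop length, and the element hops exactly when the hop does not overshoot its
destination. So if the destination lies in `[I_r, I_r + 2 ^ (k + 1 - r))`, it lies in
`[I_{r+1}, I_{r+1} + 2 ^ (k - r))`: the greedy hops read off the binary digits of `f i - (i + 1)`.
Initially `i + 1 ≤ f i` by strict monotonicity, and `f i ≤ m ≤ 2 ^ (k + 1)` by the choice of `k`,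
so after `k + 1` rounds the window has length one and the element sits at `f i`.
-/

/-- Position of an element in Oblivious-Distribute after `r` rounds. -/
def pos (k dest start : ℕ) : ℕ → ℕ
  | 0 => start
  | r + 1 =>
    if pos k dest start r + 2 ^ (k - r) ≤ dest
    then pos k dest start r + 2 ^ (k - r)
    else pos k dest start r

theorem pos_le_and_lt_add_pow {k dest start : ℕ} (hstart : start ≤ dest)
    (hdest : dest < start + 2 ^ (k + 1)) :
    ∀ r ≤ k + 1, pos k dest start r ≤ dest ∧ dest < pos k dest start r + 2 ^ (k + 1 - r) := by
  intro r
  induction r with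
  | zero => exact fun _ ↦ ⟨hstart, hdest⟩
  | succ r ih =>
    intro hr
    obtain ⟨hle, hlt⟩ := ih (by omega)
    have hhalf : 2 ^ (k + 1 - r) = 2 ^ (k - r) + 2 ^ (k - r) := by
      rw [show k + 1 - r = k - r + 1 by omega, pow_succ, mul_two]
    rw [show k + 1 - (r + 1) = k - r by omega, pos]
    split_ifs <;> omega

theorem pos_eq_dest {k dest start : ℕ} (hstart : start ≤ dest)
    (hdest : dest < start + 2 ^ (k + 1)) : pos k dest start (k + 1) = dest := by
  have := pos_le_and_lt_add_pow hstart hdest (k + 1) le_rfl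
  rw [Nat.sub_self, pow_zero] at this
  omega

theorem StrictMono.val_add_le {n a : ℕ} {f : Fin n → ℕ} (hf : StrictMono f)
    (ha : ∀ i, a ≤ f i) (i : Fin n) : (i : ℕ) + a ≤ f i := by
  obtain ⟨j, hj⟩ := i
  induction j with
  | zero => simpa using ha _
  | succ j ih =>
    have hstep := hf (show (⟨j, by omega⟩ : Fin n) < ⟨j + 1, hj⟩ from Nat.lt_succ_self j)
    have := ih (by omega)
    simp only at this ⊢
    omega

theorem le_two_pow_clog_sub_one_add_one (m : ℕ) : m ≤ 2 ^ (Nat.clog 2 m - 1 + 1) :=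
  (Nat.le_pow_clog one_lt_two m).trans (Nat.pow_le_pow_right two_pos (by omega))

/-- Correctness of Oblivious-Distribute: the final positions satisfy
`I_{k+1}(i) = f i` for every `i`, where `k = ⌈log₂ m⌉ - 1`. -/
theorem oblivious_distribute_final (n m k : ℕ) (f : Fin n → ℕ)
    (hf : StrictMono f) (hm : ∀ i, 1 ≤ f i ∧ f i ≤ m)
    (hk : k = Nat.clog 2 m - 1) :
    ∀ i : Fin n, pos k (f i) ((i : ℕ) + 1) (k + 1) = f i := by
  intro i
  have hstart : (i : ℕ) + 1 ≤ f i := hf.val_add_le (fun j ↦ (hm j).1) i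
  have hdest : f i ≤ 2 ^ (k + 1) := hk ▸ (hm i).2.trans (le_two_pow_clog_sub_one_add_one m)
  exact pos_eq_dest hstart (by omega)
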